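/- Let n ≥ 3 be odd, let k, ε, ε₂, l be integers with 2 ≤ k ≤ n−1, ε ∈ {0,1}, ε₂ ∈ {0,1}, and l ≥ max{ε+ε₂, −(n−5)/2 + k}. In ℝ^n define the bilinear form B(x,y) = Σ_i x_i y_i − (Σ_i x_i)(Σ_i y_i)/(n+1), set ρ = (2n, 2(n−1), …, 2) (i.e. ρ_i = 2(n+1−i)), and let λ = λ⁻(k,ε,ε₂,l) be the vector with first entry (n−1)/2 − k + 2l − ε − ε₂, followed by n−k−1 entries equal to (n−1)/2 − k + l, then one entry equal to (n−3)/2 − k + l + ε, then k−2 entries equal to (n−3)/2 − k + l, and last entry (n−5)/2 − k + l + ε₂. Then B(λ+ρ, λ) + (n−4)(n+1)/4 = ((l−1) + n − k + (1−ε₂))(2(l−1) + n + 1 − 2ε) − (n+1)ε₂. -/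

import Mathlib

/-!
The weight `λ⁻` is constant on the blocks `{0}`, `[1, n-k)`, `{n-k}`, `[n-k+1, n-1)`, `{n-1}`,
and `ρ` is affine in the index, so every sum in `B(λ+ρ, λ)` is a sum of arithmetic progressions.
Moreover `∑ λᵢ = (n+1)(l - k + (n-2)/2)` is divisible by `n+1`, so the correction term of `B` is a
polynomial, and the resulting identity holds for all real `ε, ε₂, l` up to `2ε(ε-1) + 2ε₂(ε₂-1)`,
which vanishes for `ε, ε₂ ∈ {0, 1}`.
-/

open Finset

theorem Finset.sum_Ico_affine {a b : ℕ} (hab : a ≤ b) (p q : ℝ) :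
    ∑ i ∈ Ico a b, (p + q * i) = ((b : ℝ) - a) * p + q * ((b : ℝ) * (b - 1) - a * (a - 1)) / 2 := by
  induction b, hab using Nat.le_induction with
  | base => simp
  | succ b hab ih => rw [sum_Ico_succ_top hab, ih]; push_cast; ring

section Blocks

variable {n k : ℕ}

theorem Finset.sum_range_eq_sum_blocks {M : Type*} [AddCommMonoid M] (hk : 2 ≤ k) (hkn : k < n)
    (f : ℕ → M) :
    ∑ i ∈ range n, f i = f 0 + ∑ i ∈ Ico 1 (n - k), f i + f (n - k)
      + ∑ i ∈ Ico (n - k + 1) (n - 1), f i + f (n - 1) := by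
  have h₀ : Ico 0 1 = {0} := rfl
  have h₁ : Ico (n - k) (n - k + 1) = {n - k} := Nat.Ico_succ_singleton _
  have h₂ : Ico (n - 1) n = {n - 1} := by
    simpa [Nat.sub_add_cancel (by omega : 1 ≤ n)] using Nat.Ico_succ_singleton (n - 1)
  rw [range_eq_Ico, ← sum_Ico_consecutive f (by omega : 0 ≤ 1) (by omega : 1 ≤ n),
    ← sum_Ico_consecutive f (by omega : 1 ≤ n - k) (by omega : n - k ≤ n),
    ← sum_Ico_consecutive f (by omega : n - k ≤ n - k + 1) (by omega : n - k + 1 ≤ n),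
    ← sum_Ico_consecutive f (by omega : n - k + 1 ≤ n - 1) (by omega : n - 1 ≤ n),
    h₀, h₁, h₂, sum_singleton, sum_singleton, sum_singleton]
  abel

theorem Finset.sum_range_eq_of_affine_on_blocks (hk : 2 ≤ k) (hkn : k < n) (f : ℕ → ℝ)
    {p q p' q' : ℝ} (h₁ : ∀ i ∈ Ico 1 (n - k), f i = p + q * i)
    (h₂ : ∀ i ∈ Ico (n - k + 1) (n - 1), f i = p' + q' * i) :
    ∑ i ∈ range n, f i = f 0 + (((n : ℝ) - k - 1) * p + q * ((n - k) * (n - k - 1)) / 2)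
      + f (n - k) + (((k : ℝ) - 2) * p' + q' * ((n - 1) * (n - 2) - (n - k + 1) * (n - k)) / 2)
      + f (n - 1) := by
  rw [sum_range_eq_sum_blocks hk hkn, sum_congr rfl h₁, sum_congr rfl h₂,
    sum_Ico_affine (by omega), sum_Ico_affine (by omega)]
  push_cast [Nat.cast_sub (by omega : k ≤ n), Nat.cast_sub (by omega : 1 ≤ n)]
  ring

end Blocks

noncomputable section

def cpnForm (n : ℕ) (x y : Fin n → ℝ) : ℝ :=
  (∑ i, x i * y i) - (∑ i, x i) * (∑ i, y i) / ((n : ℝ) + 1)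

def cpnRho (n i : ℕ) : ℝ := 2 * ((n : ℝ) + 1 - ((i : ℝ) + 1))

def lambdaMinus (n k : ℕ) (ε ε₂ l : ℝ) (i : ℕ) : ℝ :=
  if i = 0 then ((n : ℝ) - 1) / 2 - k + 2 * l - ε - ε₂
  else if i = n - 1 then ((n : ℝ) - 5) / 2 - k + l + ε₂
  else if i + k < n then ((n : ℝ) - 1) / 2 - k + l
  else if i + k = n then ((n : ℝ) - 3) / 2 - k + l + ε
  else ((n : ℝ) - 3) / 2 - k + l

theorem sum_range_cpnRho (n : ℕ) : ∑ i ∈ range n, cpnRho n i = n * (n + 1) := by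
  have h : ∀ i ∈ range n, cpnRho n i = 2 * n + -2 * i := fun i _ => by rw [cpnRho]; ring
  rw [sum_congr rfl h, range_eq_Ico, sum_Ico_affine (Nat.zero_le n)]
  push_cast
  ring

namespace lambdaMinus

variable {n k : ℕ} (ε ε₂ l : ℝ)

theorem apply_zero : lambdaMinus n k ε ε₂ l 0 = ((n : ℝ) - 1) / 2 - k + 2 * l - ε - ε₂ := if_pos rfl

theorem apply_of_mem_Ico_one (hk : 2 ≤ k) {i : ℕ} (hi : i ∈ Ico 1 (n - k)) :
    lambdaMinus n k ε ε₂ l i = ((n : ℝ) - 1) / 2 - k + l := by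
  rw [mem_Ico] at hi
  rw [lambdaMinus, if_neg (by omega), if_neg (by omega), if_pos (by omega)]

theorem apply_sub (hk : 2 ≤ k) (hkn : k < n) :
    lambdaMinus n k ε ε₂ l (n - k) = ((n : ℝ) - 3) / 2 - k + l + ε := by
  rw [lambdaMinus, if_neg (by omega), if_neg (by omega), if_neg (by omega), if_pos (by omega)]

theorem apply_of_mem_Ico_succ {i : ℕ} (hi : i ∈ Ico (n - k + 1) (n - 1)) :
    lambdaMinus n k ε ε₂ l i = ((n : ℝ) - 3) / 2 - k + l := by
  rw [mem_Ico] at hi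
  rw [lambdaMinus, if_neg (by omega), if_neg (by omega), if_neg (by omega), if_neg (by omega)]

theorem apply_pred (hn : 1 < n) :
    lambdaMinus n k ε ε₂ l (n - 1) = ((n : ℝ) - 5) / 2 - k + l + ε₂ := by
  rw [lambdaMinus, if_neg (by omega), if_pos rfl]

end lambdaMinus

variable {n k : ℕ}

theorem sum_range_lambdaMinus (hk : 2 ≤ k) (hkn : k < n) (ε ε₂ l : ℝ) :
    ∑ i ∈ range n, lambdaMinus n k ε ε₂ l i = (n + 1) * (l - k + (n - 2) / 2) := by
  rw [sum_range_eq_of_affine_on_blocks hk hkn _ (p := ((n : ℝ) - 1) / 2 - k + l) (q := 0)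
      (p' := ((n : ℝ) - 3) / 2 - k + l) (q' := 0)
      (fun i hi => by rw [lambdaMinus.apply_of_mem_Ico_one ε ε₂ l hk hi]; ring)
      (fun i hi => by rw [lambdaMinus.apply_of_mem_Ico_succ ε ε₂ l hi]; ring),
    lambdaMinus.apply_zero, lambdaMinus.apply_sub ε ε₂ l hk hkn,
    lambdaMinus.apply_pred ε ε₂ l (by omega)]
  ring

theorem cpnForm_lambdaMinus (hk : 2 ≤ k) (hkn : k < n) (ε ε₂ l : ℝ) :
    cpnForm n (fun i => lambdaMinus n k ε ε₂ l i + cpnRho n i) (fun i => lambdaMinus n k ε ε₂ l i)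
        + ((n : ℝ) - 4) * ((n : ℝ) + 1) / 4
      = ((l - 1) + n - k + (1 - ε₂)) * (2 * (l - 1) + n + 1 - 2 * ε) - (n + 1) * ε₂
        + 2 * (ε * (ε - 1)) + 2 * (ε₂ * (ε₂ - 1)) := by
  set g := lambdaMinus n k ε ε₂ l with hg
  set c := ((n : ℝ) - 1) / 2 - k + l
  set c' := ((n : ℝ) - 3) / 2 - k + l
  have hc : ∀ i ∈ Ico 1 (n - k), (g i + cpnRho n i) * g i = c * (c + 2 * n) + -2 * c * i := by
    intro i hi
    rw [hg, lambdaMinus.apply_of_mem_Ico_one ε ε₂ l hk hi, cpnRho]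
    ring
  have hc' : ∀ i ∈ Ico (n - k + 1) (n - 1),
      (g i + cpnRho n i) * g i = c' * (c' + 2 * n) + -2 * c' * i := by
    intro i hi
    rw [hg, lambdaMinus.apply_of_mem_Ico_succ ε ε₂ l hi, cpnRho]
    ring
  rw [cpnForm, Fin.sum_univ_eq_sum_range (fun i => (g i + cpnRho n i) * g i),
    Fin.sum_univ_eq_sum_range (fun i => g i + cpnRho n i), Fin.sum_univ_eq_sum_range g,
    sum_add_distrib, sum_range_lambdaMinus hk hkn, sum_range_cpnRho,
    sum_range_eq_of_affine_on_blocks hk hkn _ hc hc', hg, lambdaMinus.apply_zero,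
    lambdaMinus.apply_sub ε ε₂ l hk hkn, lambdaMinus.apply_pred ε ε₂ l (by omega)]
  simp only [cpnRho, c, c']
  push_cast [Nat.cast_sub hkn.le, Nat.cast_sub (by omega : 1 ≤ n)]
  field_simp
  ring

end

theorem cpn_rs_eigenvalue_minus_general (n k ε ε₂ l : ℕ)
    (hk1 : 2 ≤ k) (hk2 : k ≤ n - 1) (hε : ε = 0 ∨ ε = 1) (hε₂ : ε₂ = 0 ∨ ε₂ = 1) :
    let ρ : Fin n → ℝ := fun i => 2 * ((n : ℝ) + 1 - ((i : ℕ) + 1))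
    let lam : Fin n → ℝ := fun i =>
      if (i : ℕ) = 0 then ((n : ℝ) - 1) / 2 - k + 2 * l - ε - ε₂
      else if (i : ℕ) = n - 1 then ((n : ℝ) - 5) / 2 - k + l + ε₂
      else if (i : ℕ) + k < n then ((n : ℝ) - 1) / 2 - k + l
      else if (i : ℕ) + k = n then ((n : ℝ) - 3) / 2 - k + l + ε
      else ((n : ℝ) - 3) / 2 - k + l
    let B : (Fin n → ℝ) → (Fin n → ℝ) → ℝ := fun x y =>
      (∑ i, x i * y i) - (∑ i, x i) * (∑ i, y i) / ((n : ℝ) + 1)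
    B (fun i => lam i + ρ i) lam + ((n : ℝ) - 4) * ((n : ℝ) + 1) / 4
      = (((l : ℝ) - 1) + (n : ℝ) - k + (1 - (ε₂ : ℝ))) * (2 * ((l : ℝ) - 1) + (n : ℝ) + 1 - 2 * ε)
        - ((n : ℝ) + 1) * (ε₂ : ℝ) := by
  intro ρ lam B
  have hε' : (ε : ℝ) * (ε - 1) = 0 := by rcases hε with rfl | rfl <;> norm_num
  have hε₂' : (ε₂ : ℝ) * (ε₂ - 1) = 0 := by rcases hε₂ with rfl | rfl <;> norm_num
  have h := cpnForm_lambdaMinus hk1 (by omega : k < n) (ε : ℝ) ε₂ l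
  rw [hε', hε₂', mul_zero, add_zero, add_zero] at h
  -- `lam`, `ρ` and `B` unfold to `lambdaMinus`, `cpnRho` and `cpnForm`
  exact h

/-- On `ℂP^n` with `n` odd, Freudenthal's formula for the highest weight `λ⁻(k,ε,ε₂,l)`
of an irreducible summand of `(Ker P*)⁻ ⊂ L²(S_{3/2})`, `2 ≤ k ≤ n-1`:
`B(λ+ρ, λ) + (n-4)(n+1)/4 = ((l-1)+n-k+(1-ε₂))(2(l-1)+n+1-2ε) - (n+1)ε₂`. -/
theorem cpn_rs_eigenvalue_minus (n k ε ε₂ l : ℕ) (hn : Odd n) (hn3 : 3 ≤ n)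
    (hk1 : 2 ≤ k) (hk2 : k ≤ n - 1) (hε : ε = 0 ∨ ε = 1) (hε₂ : ε₂ = 0 ∨ ε₂ = 1)
    (hl1 : ε + ε₂ ≤ l) (hl2 : (k : ℤ) - ((n : ℤ) - 5) / 2 ≤ (l : ℤ)) :
    let ρ : Fin n → ℝ := fun i => 2 * ((n : ℝ) + 1 - ((i : ℕ) + 1))
    let lam : Fin n → ℝ := fun i =>
      if (i : ℕ) = 0 then ((n : ℝ) - 1) / 2 - k + 2 * l - ε - ε₂
      else if (i : ℕ) = n - 1 then ((n : ℝ) - 5) / 2 - k + l + ε₂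
      else if (i : ℕ) + k < n then ((n : ℝ) - 1) / 2 - k + l
      else if (i : ℕ) + k = n then ((n : ℝ) - 3) / 2 - k + l + ε
      else ((n : ℝ) - 3) / 2 - k + l
    let B : (Fin n → ℝ) → (Fin n → ℝ) → ℝ := fun x y =>
      (∑ i, x i * y i) - (∑ i, x i) * (∑ i, y i) / ((n : ℝ) + 1)
    B (fun i => lam i + ρ i) lam + ((n : ℝ) - 4) * ((n : ℝ) + 1) / 4
      = (((l : ℝ) - 1) + (n : ℝ) - k + (1 - (ε₂ : ℝ))) * (2 * ((l : ℝ) - 1) + (n : ℝ) + 1 - 2 * ε)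
        - ((n : ℝ) + 1) * (ε₂ : ℝ) :=
  cpn_rs_eigenvalue_minus_general n k ε ε₂ l hk1 hk2 hε hε₂
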